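/- arXiv:2306.01633 — 8 statements merged into one kernel-verified Lean document; each statement's English description precedes it below -/
import Mathlib

section
/- Let F be a field and suppose f(x) = a_n x^n + ... + a_1 x + a_0 in F[x] with a_0 ≠ 0 and a_n ≠ 0. If α_0, ..., α_n are n+1 distinct nonzero elements of F, then there exists some α_i such that the polynomial f(x)·(x - α_i) has no zero coefficient between its constant term and its leading term provided f does; more precisely, letting w(g) denote the maximum number of consecutive zero coefficients of g among coefficients of degrees 0 through deg(g), we have w(f(x)·(x - α_i)) = max(w(f(x)) - 1, 0). -/
open Polynomial

/-- `maxZeroRun f` is the maximum number of consecutive zero coefficients of `f`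
among the coefficients of degrees `0` through `natDegree f`. -/
noncomputable def maxZeroRun {F : Type*} [Semiring F] (f : F[X]) : ℕ :=
  sSup {L | ∃ j, j + L ≤ f.natDegree + 1 ∧ ∀ i < L, f.coeff (j + i) = 0}

lemma maxZeroRun_bdd {F : Type*} [Semiring F] (f : F[X]) :
    BddAbove {L | ∃ j, j + L ≤ f.natDegree + 1 ∧ ∀ i < L, f.coeff (j + i) = 0} :=
  ⟨f.natDegree + 1, fun L hL => by obtain ⟨j, hj, -⟩ := hL; omega⟩

lemma maxZeroRun_mem {F : Type*} [Semiring F] (f : F[X]) :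
    ∃ j, j + maxZeroRun f ≤ f.natDegree + 1 ∧
      ∀ i < maxZeroRun f, f.coeff (j + i) = 0 :=
  Nat.sSup_mem (s := {L | ∃ j, j + L ≤ f.natDegree + 1 ∧ ∀ i < L, f.coeff (j + i) = 0})
    ⟨0, ⟨0, by omega, fun i hi => by omega⟩⟩ (maxZeroRun_bdd f)

lemma le_maxZeroRun {F : Type*} [Semiring F] (f : F[X]) {L j : ℕ}
    (h1 : j + L ≤ f.natDegree + 1) (h2 : ∀ i < L, f.coeff (j + i) = 0) :
    L ≤ maxZeroRun f :=
  le_csSup (maxZeroRun_bdd f) ⟨j, h1, h2⟩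

lemma coeff_mul_X_sub_C' {F : Type*} [CommRing F] (f : F[X]) (α : F) (k : ℕ) :
    (f * (X - C α)).coeff (k + 1) = f.coeff k - α * f.coeff (k + 1) := by
  rw [mul_sub, coeff_sub, coeff_mul_X, coeff_mul_C]; ring

lemma key_lemma {F : Type*} [Field F] (f : F[X]) (hf : f ≠ 0) (h0 : f.coeff 0 ≠ 0)
    (α : F) (hα : α ≠ 0)
    (hT : ∀ j, 1 ≤ j → j ≤ f.natDegree → f.coeff j ≠ 0 →
      α ≠ f.coeff (j - 1) / f.coeff j) :
    maxZeroRun (f * (X - C α)) = maxZeroRun f - 1 := by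
  set n := f.natDegree with hn
  set g := f * (X - C α) with hgdef
  set w := maxZeroRun f with hw
  have hXC : (X - C α : F[X]) ≠ 0 := X_sub_C_ne_zero α
  have hg0 : g ≠ 0 := mul_ne_zero hf hXC
  have hdeg : g.natDegree = n + 1 := by
    rw [hgdef, natDegree_mul hf hXC, natDegree_X_sub_C]
  have hc0 : g.coeff 0 ≠ 0 := by
    rw [hgdef, mul_coeff_zero, coeff_sub, coeff_X_zero, coeff_C_zero]
    simpa using mul_ne_zero h0 (neg_ne_zero.mpr hα)
  have hct : g.coeff (n + 1) ≠ 0 := by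
    rw [← hdeg]
    exact fun h => hg0 (leadingCoeff_eq_zero.mp h)
  have hrec : ∀ k, g.coeff (k + 1) = f.coeff k - α * f.coeff (k + 1) :=
    fun k => coeff_mul_X_sub_C' f α k
  -- Lower bound : w - 1 ≤ maxZeroRun g
  have hlow : w - 1 ≤ maxZeroRun g := by
    rcases Nat.eq_zero_or_pos w with h | h
    · simp [h]
    · obtain ⟨j, hj, hz⟩ := maxZeroRun_mem f
      rw [← hw] at hj hz
      refine le_maxZeroRun g (j := j + 1) (by omega) ?_
      intro i hi
      have h1 : f.coeff (j + i) = 0 := hz i (by omega)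
      have h2 : f.coeff (j + (i + 1)) = 0 := hz (i + 1) (by omega)
      have := hrec (j + i)
      have he : j + 1 + i = j + i + 1 := by omega
      rw [he, this, h1]
      rw [show j + i + 1 = j + (i + 1) by omega, h2]
      ring
  -- Upper bound : maxZeroRun g ≤ w - 1
  have hup : maxZeroRun g ≤ w - 1 := by
    by_contra hM
    set M := maxZeroRun g with hMdef
    set m := max w 1 with hm
    have hMm : m ≤ M := by omega
    obtain ⟨j, hj, hz⟩ := maxZeroRun_mem g
    rw [← hMdef] at hj hz
    rw [hdeg] at hj
    have hz' : ∀ i < m, g.coeff (j + i) = 0 := fun i hi => hz i (by omega)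
    have hm1 : 1 ≤ m := by omega
    have hj1 : 1 ≤ j := by
      rcases Nat.eq_zero_or_pos j with h | h
      · exact absurd (by simpa [h] using hz' 0 hm1) hc0
      · exact h
    have hjm : j + m ≤ n + 1 := by
      by_contra hc
      have hi : n + 1 - j < m := by omega
      have := hz' (n + 1 - j) hi
      rw [show j + (n + 1 - j) = n + 1 by omega] at this
      exact hct this
    have hrel : ∀ i < m, f.coeff (j - 1 + i) = α * f.coeff (j + i) := by
      intro i hi
      have h1 := hz' i hi
      have h2 := hrec (j - 1 + i)
      rw [show j - 1 + i + 1 = j + i by omega] at h2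
      rw [h2] at h1
      linear_combination h1
    by_cases hfj : f.coeff j = 0
    · -- all coefficients in the window vanish, giving a longer run in f
      have hall : ∀ i, i ≤ m → f.coeff (j - 1 + i) = 0 := by
        intro i
        induction i with
        | zero =>
          intro _
          have := hrel 0 hm1
          simpa [hfj] using this
        | succ i ih =>
          intro hi
          have h1 := hrel i (by omega)
          have h2 := ih (by omega)
          rw [h2] at h1
          have h3 : f.coeff (j + i) = 0 := by
            rcases mul_eq_zero.mp h1.symm with h | h
            · exact absurd h hα
            · exact h
          rw [show j - 1 + (i + 1) = j + i by omega]
          exact h3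
      have : m + 1 ≤ w := by
        refine le_maxZeroRun f (j := j - 1) (by omega) ?_
        intro i hi
        exact hall i (by omega)
      omega
    · -- α is a forbidden ratio
      have h1 := hrel 0 hm1
      simp only [add_zero] at h1
      have : α = f.coeff (j - 1) / f.coeff j := by
        rw [eq_div_iff hfj]
        exact h1.symm
      exact hT j hj1 (by omega) hfj this
  omega

theorem stmt_1 {F : Type*} [Field F] (f : F[X]) (hf : f ≠ 0) (h0 : f.coeff 0 ≠ 0)
    (α : Fin (f.natDegree + 1) → F) (hinj : Function.Injective α)
    (hne : ∀ i, α i ≠ 0) :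
    ∃ i, maxZeroRun (f * (X - C (α i))) = max (maxZeroRun f - 1) 0 := by
  classical
  set T : Finset F :=
    (Finset.Icc 1 f.natDegree).image (fun j => f.coeff (j - 1) / f.coeff j) with hT
  have hcard : T.card ≤ f.natDegree := le_trans (Finset.card_image_le) (by simp)
  have hex : ∃ i, α i ∉ T := by
    by_contra hc
    push_neg at hc
    have hsub : Finset.univ.image α ⊆ T := by
      intro x hx
      obtain ⟨i, -, rfl⟩ := Finset.mem_image.mp hx
      exact hc i
    have := Finset.card_le_card hsub
    rw [Finset.card_image_of_injective _ hinj] at this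
    simp at this
    omega
  obtain ⟨i, hi⟩ := hex
  refine ⟨i, ?_⟩
  rw [key_lemma f hf h0 (α i) (hne i) ?_]
  · omega
  · intro j hj1 hjn hfj heq
    exact hi (Finset.mem_image.mpr ⟨j, Finset.mem_Icc.mpr ⟨hj1, hjn⟩, heq.symm⟩)
end

section
/- If f(x) = a_{k-1}x^{k-1} + ... + a_1 x + a_0 divides x^k - 1 over a field F and deg(f) = k - 1, then a_i ≠ 0 for all 0 ≤ i ≤ k-1. -/
open Polynomial

theorem stmt_3 {F : Type*} [Field F] (k : ℕ) (hk : 1 ≤ k) (f : F[X])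
    (hdeg : f.natDegree = k - 1) (hdvd : f ∣ X ^ k - 1) :
    ∀ i ≤ k - 1, f.coeff i ≠ 0 := by
  obtain ⟨g, hg⟩ := hdvd
  have hXk : (X ^ k - 1 : F[X]) ≠ 0 := by
    intro h
    have := congrArg (fun p => Polynomial.coeff p 0) h
    simp only [coeff_sub, coeff_X_pow, coeff_one, if_neg (by omega : ¬ (0:ℕ) = k),
      if_pos rfl, coeff_zero, zero_sub] at this
    exact one_ne_zero (neg_eq_zero.mp this)
  have hf0 : f ≠ 0 := by rintro rfl; rw [zero_mul] at hg; exact hXk hg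
  have hg0 : g ≠ 0 := by rintro rfl; rw [mul_zero] at hg; exact hXk hg
  have hdegXk : (X ^ k - 1 : F[X]).natDegree = k := by
    rw [← C_1, Polynomial.natDegree_X_pow_sub_C]
  have hdg : g.natDegree = 1 := by
    have := Polynomial.natDegree_mul hf0 hg0
    rw [← hg, hdegXk, hdeg] at this
    omega
  set a := g.coeff 1 with ha
  set b := g.coeff 0 with hb
  have hgeq : g = C a * X + C b :=
    Polynomial.eq_X_add_C_of_natDegree_le_one (le_of_eq hdg)
  -- coefficient formula for j+1
  have hco : ∀ j : ℕ, (X ^ k - 1 : F[X]).coeff (j+1) = a * f.coeff j + b * f.coeff (j+1) := by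
    intro j
    rw [hg, hgeq, mul_add, coeff_add, show f * (C a * X) = f * C a * X by ring,
      coeff_mul_X, coeff_mul_C, coeff_mul_C]
    ring
  -- constant term
  have hb0 : f.coeff 0 * b = -1 := by
    have := congrArg (fun p => Polynomial.coeff p 0) hg
    simp only [coeff_sub, coeff_X_pow, coeff_one, mul_coeff_zero,
      if_neg (by omega : ¬ (0:ℕ) = k), if_pos rfl, if_true, zero_sub] at this
    linear_combination -this
  have hf00 : f.coeff 0 ≠ 0 := fun h => by simp [h] at hb0
  have hbne : b ≠ 0 := fun h => by simp [h] at hb0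
  -- leading term: a ≠ 0
  have hane : a ≠ 0 := by
    have h1 : (X ^ k - 1 : F[X]).coeff k = 1 := by
      rw [coeff_sub, coeff_X_pow, if_pos rfl, coeff_one, if_neg (by omega : ¬ k = 0), sub_zero]
    rcases Nat.exists_eq_add_of_le hk with ⟨m, hm⟩
    have hfk : f.coeff k = 0 := by
      apply Polynomial.coeff_eq_zero_of_natDegree_lt
      omega
    have := hco (k - 1)
    rw [(by omega : k - 1 + 1 = k), h1, hfk, mul_zero, add_zero] at this
    intro h0
    rw [h0, zero_mul] at this
    exact one_ne_zero this
  intro i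
  induction i with
  | zero => intro _; exact hf00
  | succ n ih =>
    intro hn
    have hn' : n ≤ k - 1 := by omega
    have hz : (X ^ k - 1 : F[X]).coeff (n+1) = 0 := by
      rw [coeff_sub, coeff_X_pow, if_neg (by omega : ¬ n + 1 = k), coeff_one,
        if_neg (by omega : ¬ n + 1 = 0), sub_zero]
    have hrec := hco n
    rw [hz] at hrec
    intro h0
    rw [h0, mul_zero, add_zero] at hrec
    exact mul_ne_zero hane (ih hn') hrec.symm
end

section
/- Suppose F is a field in which x^k - 1 has k distinct roots. Let C be the k×k circulant matrix over F with first column (a_0, ..., a_{k-1})^T, and let f(x) = a_0 + a_1 x + ... + a_{k-1}x^{k-1}. Then rank(C) = k - deg(gcd(f(x), x^k - 1)). -/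
open Polynomial Finset Matrix

/-!
The Vandermonde matrix `V` of the powers `ω ^ i` of a primitive `k`-th root of unity is
invertible and satisfies `V * C = diag (f (ω ^ i)) * V`, so `rank C` is the number of `k`-th
roots of unity that are not roots of `f`. Since `X ^ k - 1` splits with simple roots, so does
its divisor `gcd f (X ^ k - 1)`, whose roots are the `k`-th roots of unity that are roots of `f`;
its degree therefore counts exactly those.
-/

section Circulant

variable {R : Type*} [CommRing R] {k : ℕ} [NeZero k]

theorem sum_pow_mul_apply_sub_eq_eval_mul_pow {ζ : R} (hζ : ζ ^ k = 1) (a : Fin k → R)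
    (j : Fin k) :
    ∑ m : Fin k, ζ ^ (m : ℕ) * a (m - j) =
      (∑ n : Fin k, C (a n) * X ^ (n : ℕ)).eval ζ * ζ ^ (j : ℕ) := by
  rw [← Equiv.sum_comp (Equiv.addRight j), eval_finsetSum, Finset.sum_mul]
  refine Finset.sum_congr rfl fun n _ => ?_
  rw [Equiv.coe_addRight, add_sub_cancel_right, Fin.val_add, ← pow_eq_pow_mod _ hζ]
  simp only [eval_mul, eval_C, eval_pow, eval_X]
  ring

theorem vandermonde_mul_circulant {ω : R} (hω : ω ^ k = 1) (a : Fin k → R) :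
    vandermonde (fun i : Fin k => ω ^ (i : ℕ)) * circulant a =
      diagonal (fun i : Fin k => (∑ n : Fin k, C (a n) * X ^ (n : ℕ)).eval (ω ^ (i : ℕ))) *
        vandermonde (fun i : Fin k => ω ^ (i : ℕ)) := by
  ext i j
  have hζ : (ω ^ (i : ℕ)) ^ k = 1 := by rw [← pow_mul, mul_comm, pow_mul, hω, one_pow]
  rw [diagonal_mul]
  simpa [mul_apply, vandermonde_apply, circulant_apply] using
    sum_pow_mul_apply_sub_eq_eval_mul_pow hζ a j

end Circulant

section PrimitiveRoot

variable {F : Type*} [Field F] {k : ℕ} [NeZero k] {ω : F}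

theorem IsPrimitiveRoot.card_filter_fin_pow (hω : IsPrimitiveRoot ω k) (p : F → Prop)
    [DecidablePred p] :
    #{i : Fin k | p (ω ^ (i : ℕ))} = #{x ∈ nthRootsFinset k (1 : F) | p x} := by
  refine card_bij (fun i _ => ω ^ (i : ℕ)) (fun i hi => ?_) (fun i _ j _ hij => ?_)
    fun x hx => ?_
  · rw [mem_filter] at hi ⊢
    refine ⟨(Polynomial.mem_nthRootsFinset (NeZero.pos k) _).2 ?_, hi.2⟩
    rw [← pow_mul, mul_comm, pow_mul, hω.pow_eq_one, one_pow]
  · exact Fin.ext (hω.pow_inj i.isLt j.isLt hij)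
  · rw [mem_filter] at hx
    obtain ⟨i, hik, rfl⟩ :=
      hω.eq_pow_of_pow_eq_one ((Polynomial.mem_nthRootsFinset (NeZero.pos k) _).1 hx.1)
    exact ⟨⟨i, hik⟩, mem_filter.2 ⟨mem_univ _, hx.2⟩, rfl⟩

theorem IsPrimitiveRoot.rank_circulant [DecidableEq F] (hω : IsPrimitiveRoot ω k)
    (a : Fin k → F) :
    (circulant a).rank =
      k - #{i : Fin k | (∑ n : Fin k, C (a n) * X ^ (n : ℕ)).IsRoot (ω ^ (i : ℕ))} := by
  set e := fun i : Fin k => (∑ n : Fin k, C (a n) * X ^ (n : ℕ)).eval (ω ^ (i : ℕ))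
  set V := vandermonde fun i : Fin k => ω ^ (i : ℕ)
  have hV : IsUnit V.det := by
    rw [isUnit_iff_ne_zero, det_vandermonde_ne_zero_iff]
    exact fun i j hij => Fin.ext (hω.pow_inj i.isLt j.isLt hij)
  have hcount := card_filter_add_card_filter_not (s := univ) (fun i : Fin k => e i = 0)
  rw [card_univ, Fintype.card_fin] at hcount
  calc (circulant a).rank = (V * circulant a).rank :=
        (rank_mul_eq_right_of_isUnit_det V _ hV).symm
    _ = (diagonal e).rank := by
      rw [vandermonde_mul_circulant hω.pow_eq_one, rank_mul_eq_left_of_isUnit_det V _ hV]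
    _ = #{i | e i ≠ 0} := by rw [rank_diagonal, Fintype.card_subtype]
    _ = k - #{i | e i = 0} := by simp only [ne_eq]; omega

end PrimitiveRoot

section Gcd

variable {F : Type*} [Field F] [DecidableEq F]

theorem Polynomial.Separable.natDegree_eq_card_roots_toFinset {g : F[X]} (hsep : g.Separable)
    (hsplit : g.Splits) : g.natDegree = #g.roots.toFinset := by
  rw [Multiset.toFinset_card_of_nodup (nodup_roots hsep), hsplit.natDegree_eq_card_roots]

theorem Polynomial.roots_toFinset_gcd {P : F[X]} (hP : P ≠ 0) (f : F[X]) :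
    (EuclideanDomain.gcd f P).roots.toFinset = {x ∈ P.roots.toFinset | f.IsRoot x} := by
  have hgcd : EuclideanDomain.gcd f P ≠ 0 := fun h => hP (EuclideanDomain.gcd_eq_zero_iff.1 h).2
  ext x
  rw [Multiset.mem_toFinset, mem_roots hgcd, isRoot_gcd_iff_isRoot_left_right, mem_filter,
    Multiset.mem_toFinset, mem_roots hP, and_comm]

theorem Polynomial.Separable.natDegree_gcd {P : F[X]} (hsep : P.Separable) (hsplit : P.Splits)
    (f : F[X]) : (EuclideanDomain.gcd f P).natDegree = #{x ∈ P.roots.toFinset | f.IsRoot x} := by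
  have hdvd := EuclideanDomain.gcd_dvd_right f P
  rw [(hsep.of_dvd hdvd).natDegree_eq_card_roots_toFinset (hsplit.of_dvd hsep.ne_zero hdvd),
    roots_toFinset_gcd hsep.ne_zero]

theorem IsPrimitiveRoot.natDegree_gcd_X_pow_sub_one {k : ℕ} [NeZero k] {ω : F}
    (hω : IsPrimitiveRoot ω k) (f : F[X]) :
    (EuclideanDomain.gcd f (X ^ k - 1)).natDegree =
      #{x ∈ nthRootsFinset k (1 : F) | f.IsRoot x} := by
  have hsplit : (X ^ k - 1 : F[X]).Splits := by simpa using X_pow_sub_one_splits hω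
  have hsep : (X ^ k - 1 : F[X]).Separable := X_pow_sub_one_separable_iff.2 hω.neZero'.out
  rw [hsep.natDegree_gcd hsplit, nthRootsFinset_def, nthRoots, C_1]

end Gcd

theorem stmt_5 {F : Type*} [Field F] [DecidableEq F] (k : ℕ) (hk : 0 < k)
    (hroots : ∃ ω : F, IsPrimitiveRoot ω k) (a : Fin k → F) :
    (Matrix.circulant a).rank =
      k - (normalize (EuclideanDomain.gcd
        (∑ i : Fin k, C (a i) * X ^ (i : ℕ)) (X ^ k - 1))).natDegree := by
  have : NeZero k := ⟨hk.ne'⟩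
  obtain ⟨ω, hω⟩ := hroots
  rw [hω.rank_circulant, natDegree_eq_of_degree_eq degree_normalize,
    hω.natDegree_gcd_X_pow_sub_one, ← hω.card_filter_fin_pow]
end

section
/- Let p_1 and p_2 be distinct primes such that p_1 generates (Z/p_2 Z)^×. If C is a p_2 × p_2 circulant matrix with entries in F_{p_1}, then rank(C) ∈ {0, 1, p_2 - 1, p_2}. -/
/-!
The circulant matrix `circulant a` is the matrix of multiplication by `f = ∑ aᵢ xⁱ` on
`A = 𝔽_{p₁}[x]/(x^{p₂} - 1)` in the basis `1, x, …, x^{p₂-1}`. Since `Φ_{p₂}(1) = p₂ ≠ 0` in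
`𝔽_{p₁}`, the Chinese remainder theorem gives `A ≅ 𝔽_{p₁}[x]/(Φ_{p₂}) × 𝔽_{p₁}[x]/(x - 1)`, and
`Φ_{p₂}` is irreducible over `𝔽_{p₁}` because each of its irreducible factors has degree the order
of `p₁` modulo `p₂`, which is `p₂ - 1`. So `A` is a product of two fields of dimensions `p₂ - 1`
and `1`, and multiplication by `(u, v)` has rank `0`, `1`, `p₂ - 1` or `p₂` according as `u`
and `v` vanish.
-/

open Polynomial

theorem pow_val_fin_add {M : Type*} [Monoid M] {n : ℕ} {ω : M} (hω : ω ^ n = 1) (i j : Fin n) :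
    ω ^ ((i + j : Fin n) : ℕ) = ω ^ (i : ℕ) * ω ^ (j : ℕ) := by
  rw [Fin.val_add, ← pow_eq_pow_mod _ hω, pow_add]

theorem Algebra.leftMulMatrix_eq_circulant {R S : Type*} [CommRing R] [Ring S] [Algebra R S]
    {n : ℕ} [NeZero n] (b : Module.Basis (Fin n) R S) {ω : S} (hb : ∀ i, b i = ω ^ (i : ℕ))
    (hω : ω ^ n = 1) (a : Fin n → R) :
    Algebra.leftMulMatrix b (∑ k, a k • ω ^ (k : ℕ)) = Matrix.circulant a := by
  ext i j
  have hmul : (∑ k, a k • ω ^ (k : ℕ)) * b j = ∑ i, a (i - j) • b i := by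
    rw [Finset.sum_mul, ← (Equiv.subRight j).sum_comp]
    simp only [Equiv.subRight_apply, hb, smul_mul_assoc, ← pow_val_fin_add hω, sub_add_cancel]
  rw [Algebra.leftMulMatrix_eq_repr_mul, hmul, Module.Basis.repr_sum_self, Matrix.circulant_apply]

theorem Algebra.rank_leftMulMatrix {R S ι : Type*} [CommRing R] [Ring S] [Algebra R S]
    [Fintype ι] [DecidableEq ι] (b : Module.Basis ι R S) (x : S) :
    (Algebra.leftMulMatrix b x).rank = Module.finrank R (LinearMap.mulLeft R x).range := by
  rw [Matrix.rank_eq_finrank_range_toLin _ b b, ← Algebra.toMatrix_lmul_eq, Matrix.toLin_toMatrix]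

theorem AdjoinRoot.exists_basis_eq_root_pow (R : Type*) [CommRing R] [Nontrivial R] (n : ℕ)
    [NeZero n] : ∃ b : Module.Basis (Fin n) R (AdjoinRoot (X ^ n - 1 : R[X])),
      ∀ i, b i = AdjoinRoot.root (X ^ n - 1 : R[X]) ^ (i : ℕ) := by
  have hmonic : (X ^ n - 1 : R[X]).Monic := by
    simpa using monic_X_pow_sub_C (1 : R) (NeZero.ne n)
  have hdeg : (X ^ n - 1 : R[X]).natDegree = n := by
    simpa using natDegree_X_pow_sub_C (n := n) (r := (1 : R))
  exact ⟨(AdjoinRoot.powerBasis' hmonic).basis.reindex (finCongr hdeg), fun i => by simp; rfl⟩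

theorem AdjoinRoot.root_X_pow_sub_one_pow (R : Type*) [CommRing R] (n : ℕ) :
    AdjoinRoot.root (X ^ n - 1 : R[X]) ^ n = 1 := by
  have h := AdjoinRoot.eval₂_root (X ^ n - 1 : R[X])
  rwa [eval₂_sub, eval₂_X_pow, eval₂_one, sub_eq_zero] at h

theorem Matrix.rank_circulant_eq_finrank_range_mulLeft {R : Type*} [CommRing R] [Nontrivial R]
    {n : ℕ} [NeZero n] (a : Fin n → R) :
    (Matrix.circulant a).rank = Module.finrank R
      (LinearMap.mulLeft R (∑ k, a k • AdjoinRoot.root (X ^ n - 1 : R[X]) ^ (k : ℕ))).range := by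
  obtain ⟨b, hb⟩ := AdjoinRoot.exists_basis_eq_root_pow R n
  rw [← Algebra.leftMulMatrix_eq_circulant b hb (AdjoinRoot.root_X_pow_sub_one_pow R n),
    Algebra.rank_leftMulMatrix]

theorem LinearMap.finrank_range_prodMap {K M N M₂ N₂ : Type*} [Field K] [AddCommGroup M]
    [Module K M] [AddCommGroup N] [Module K N] [AddCommGroup M₂] [Module K M₂] [AddCommGroup N₂]
    [Module K N₂] [FiniteDimensional K M₂] [FiniteDimensional K N₂] (f : M →ₗ[K] M₂)
    (g : N →ₗ[K] N₂) :
    Module.finrank K (f.prodMap g).range = Module.finrank K f.range + Module.finrank K g.range := by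
  have h := LinearMap.finrank_range_of_inj (f := f.range.subtype.prodMap g.range.subtype) (by
    rw [LinearMap.coe_prodMap]
    exact f.range.injective_subtype.prodMap g.range.injective_subtype)
  rw [LinearMap.range_prodMap, Submodule.range_subtype, Submodule.range_subtype,
    Module.finrank_prod] at h
  rw [LinearMap.range_prodMap, h]

theorem LinearMap.finrank_range_mulLeft_prod {k A B : Type*} [Field k] [Ring A] [Ring B]
    [Algebra k A] [Algebra k B] [FiniteDimensional k A] [FiniteDimensional k B] (x : A × B) :
    Module.finrank k (LinearMap.mulLeft k x).range =
      Module.finrank k (LinearMap.mulLeft k x.1).range +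
        Module.finrank k (LinearMap.mulLeft k x.2).range := by
  rw [← LinearMap.finrank_range_prodMap]
  rfl

theorem LinearMap.finrank_range_mulLeft_algEquiv {k A B : Type*} [Field k] [Ring A] [Ring B]
    [Algebra k A] [Algebra k B] (e : A ≃ₐ[k] B) (x : A) :
    Module.finrank k (LinearMap.mulLeft k (e x)).range =
      Module.finrank k (LinearMap.mulLeft k x).range := by
  have h : LinearMap.mulLeft k (e x) =
      e.toLinearEquiv.toLinearMap ∘ₗ LinearMap.mulLeft k x ∘ₗ e.symm.toLinearEquiv.toLinearMap := by
    ext y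
    simp
  rw [h, LinearMap.range_comp, LinearMap.range_comp_of_range_eq_top _ (LinearEquiv.range _),
    LinearEquiv.finrank_map_eq]

theorem LinearMap.finrank_range_mulLeft_of_field {k K : Type*} [Field k] [Field K] [Algebra k K]
    (x : K) :
    Module.finrank k (LinearMap.mulLeft k x).range = 0 ∨
      Module.finrank k (LinearMap.mulLeft k x).range = Module.finrank k K := by
  rcases eq_or_ne x 0 with rfl | hx
  · left
    rw [LinearMap.mulLeft_zero_eq_zero, LinearMap.range_zero, finrank_bot]
  · right
    rw [LinearMap.range_eq_top_of_surjective _ (fun y => ⟨x⁻¹ * y, mul_inv_cancel_left₀ hx y⟩),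
      finrank_top]

theorem LinearMap.finrank_range_mulLeft_prod_of_field {k K L : Type*} [Field k] [Field K] [Field L]
    [Algebra k K] [Algebra k L] [FiniteDimensional k K] [FiniteDimensional k L] (x : K × L) :
    Module.finrank k (LinearMap.mulLeft k x).range = 0 ∨
      Module.finrank k (LinearMap.mulLeft k x).range = Module.finrank k K ∨
      Module.finrank k (LinearMap.mulLeft k x).range = Module.finrank k L ∨
      Module.finrank k (LinearMap.mulLeft k x).range = Module.finrank k K + Module.finrank k L := by
  rw [LinearMap.finrank_range_mulLeft_prod]
  rcases LinearMap.finrank_range_mulLeft_of_field (k := k) x.1 with h₁ | h₁ <;>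
  rcases LinearMap.finrank_range_mulLeft_of_field (k := k) x.2 with h₂ | h₂ <;>
  omega

noncomputable def AdjoinRoot.algEquivProdOfIsCoprime {R : Type*} [CommRing R] {P Q : R[X]}
    (h : IsCoprime P Q) : AdjoinRoot (P * Q) ≃ₐ[R] AdjoinRoot P × AdjoinRoot Q :=
  (Ideal.quotientEquivAlgOfEq R (Ideal.span_singleton_mul_span_singleton P Q).symm).trans
    (AlgEquiv.ofRingEquiv (f := Ideal.quotientMulEquivQuotientProd _ _
      ((Ideal.isCoprime_span_singleton_iff P Q).mpr h)) fun _ => rfl)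

theorem Polynomial.isCoprime_cyclotomic_X_sub_one {K : Type*} [Field K] {p : ℕ} [Fact p.Prime]
    (hp : (p : K) ≠ 0) : IsCoprime (cyclotomic p K) (X - C 1) := by
  refine ((irreducible_X_sub_C (1 : K)).coprime_iff_not_dvd.mpr ?_).symm
  rwa [dvd_iff_isRoot, IsRoot, eval_one_cyclotomic_prime]

theorem ZMod.irreducible_cyclotomic_of_orderOf_eq_totient {p n : ℕ} [Fact p.Prime] (hpn : ¬p ∣ n)
    (hord : orderOf (p : ZMod n) = n.totient) : Irreducible (cyclotomic n (ZMod p)) :=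
  ZMod.irreducible_of_dvd_cyclotomic_of_natDegree hpn dvd_rfl (by
    rw [natDegree_cyclotomic, ← orderOf_units, ZMod.coe_unitOfCoprime, hord])

theorem Matrix.rank_circulant_of_irreducible_cyclotomic {K : Type*} [Field K] {p : ℕ}
    [Fact p.Prime] (hp : (p : K) ≠ 0) (hirr : Irreducible (cyclotomic p K)) (a : Fin p → K) :
    (Matrix.circulant a).rank = 0 ∨ (Matrix.circulant a).rank = 1 ∨
      (Matrix.circulant a).rank = p - 1 ∨ (Matrix.circulant a).rank = p := by
  have : NeZero p := ⟨(Fact.out : p.Prime).ne_zero⟩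
  have : Fact (Irreducible (cyclotomic p K)) := ⟨hirr⟩
  have : Fact (Irreducible (X - C 1 : K[X])) := ⟨irreducible_X_sub_C 1⟩
  have := (cyclotomic.monic p K).finite_adjoinRoot
  have := (monic_X_sub_C (1 : K)).finite_adjoinRoot
  have hΦ : Module.finrank K (AdjoinRoot (cyclotomic p K)) = p - 1 := by
    rw [(AdjoinRoot.powerBasis hirr.ne_zero).finrank, AdjoinRoot.powerBasis_dim,
      natDegree_cyclotomic, Nat.totient_prime Fact.out]
  have hX : Module.finrank K (AdjoinRoot (X - C 1 : K[X])) = 1 := by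
    rw [(AdjoinRoot.powerBasis (X_sub_C_ne_zero 1)).finrank, AdjoinRoot.powerBasis_dim,
      natDegree_X_sub_C]
  let e : AdjoinRoot (X ^ p - 1 : K[X]) ≃ₐ[K]
      AdjoinRoot (cyclotomic p K) × AdjoinRoot (X - C 1 : K[X]) :=
    (AdjoinRoot.algEquivOfEq _ _ _ (by rw [C_1, cyclotomic_prime_mul_X_sub_one])).trans
      (AdjoinRoot.algEquivProdOfIsCoprime (isCoprime_cyclotomic_X_sub_one hp))
  rw [Matrix.rank_circulant_eq_finrank_range_mulLeft, ← LinearMap.finrank_range_mulLeft_algEquiv e]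
  have := LinearMap.finrank_range_mulLeft_prod_of_field (k := K)
    (e (∑ k, a k • AdjoinRoot.root (X ^ p - 1 : K[X]) ^ (k : ℕ)))
  rw [hΦ, hX] at this
  omega

theorem stmt_8 (p₁ p₂ : ℕ) [Fact p₁.Prime] (hp₂ : p₂.Prime) (hne : p₁ ≠ p₂)
    (hgen : orderOf ((p₁ : ZMod p₂)) = p₂ - 1) (a : Fin p₂ → ZMod p₁) :
    (Matrix.circulant a).rank = 0 ∨ (Matrix.circulant a).rank = 1 ∨
      (Matrix.circulant a).rank = p₂ - 1 ∨ (Matrix.circulant a).rank = p₂ := by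
  have : Fact p₂.Prime := ⟨hp₂⟩
  have hp₁p₂ : ¬p₁ ∣ p₂ := fun h => hne ((Nat.prime_dvd_prime_iff_eq Fact.out hp₂).mp h)
  refine Matrix.rank_circulant_of_irreducible_cyclotomic (by rwa [Ne, ZMod.natCast_eq_zero_iff])
    (ZMod.irreducible_cyclotomic_of_orderOf_eq_totient hp₁p₂ ?_) a
  rw [hgen, Nat.totient_prime hp₂]
end

section
/- Let p be a prime, p_2 prime, and suppose p generates (Z/p_2 Z)^×. Let a_0, ..., a_{p_2-1} ∈ F_p, not all zero, with a_0 + a_1 + ... + a_{p_2-1} = 0 in F_p, and set f(x) = a_0 + a_1 x + ... + a_{p_2-1}x^{p_2-1}. Then deg(gcd(f(x), x^{p_2} - 1)) = 1. -/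
open Polynomial

theorem EuclideanDomain.associated_gcd_mul_of_irreducible {R : Type*} [EuclideanDomain R]
    [DecidableEq R] {d q f : R} (hd : d ≠ 0) (hq : Irreducible q) (hdf : d ∣ f)
    (hf : ¬d * q ∣ f) : Associated (EuclideanDomain.gcd f (d * q)) d := by
  obtain ⟨h, hh⟩ := EuclideanDomain.dvd_gcd hdf (dvd_mul_right d q)
  have hhq : h ∣ q :=
    (mul_dvd_mul_iff_left hd).1 (hh ▸ EuclideanDomain.gcd_dvd_right f (d * q))
  rcases hq.dvd_iff.1 hhq with hunit | hassoc
  · exact hh ▸ associated_mul_unit_left d h hunit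
  · refine absurd ?_ hf
    rw [(hassoc.mul_left d).dvd_iff_dvd_left, ← hh]
    exact EuclideanDomain.gcd_dvd_left f (d * q)

theorem Polynomial.coeff_sum_fin_C_mul_X_pow {R : Type*} [Semiring R] {n : ℕ} (a : Fin n → R)
    (i : Fin n) : (∑ j : Fin n, C (a j) * X ^ (j : ℕ)).coeff i = a i := by
  simp only [finsetSum_coeff, coeff_C_mul_X_pow, Fin.val_inj, Finset.sum_ite_eq,
    Finset.mem_univ, if_true]

theorem Polynomial.sum_fin_C_mul_X_pow_ne_zero {R : Type*} [Semiring R] {n : ℕ}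
    {a : Fin n → R} (ha : a ≠ 0) : ∑ j : Fin n, C (a j) * X ^ (j : ℕ) ≠ 0 := by
  obtain ⟨i, hi⟩ := Function.ne_iff.1 ha
  exact fun h0 => hi (by rw [← coeff_sum_fin_C_mul_X_pow a i, h0, coeff_zero, Pi.zero_apply])

theorem stmt_9_general (p p₂ : ℕ) (hp₂ : p₂.Prime) (hne : p ≠ p₂)
    [Fact p.Prime] [DecidableEq (ZMod p)]
    (hgen : orderOf ((p : ZMod p₂)) = p₂ - 1)
    (a : Fin p₂ → ZMod p) (ha : a ≠ 0) (hsum : ∑ i, a i = 0) :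
    (normalize (EuclideanDomain.gcd
        (∑ i : Fin p₂, C (a i) * X ^ (i : ℕ)) (X ^ p₂ - 1))).natDegree = 1 := by
  have := Fact.mk hp₂
  set f := ∑ i : Fin p₂, C (a i) * X ^ (i : ℕ)
  have hpp₂ : ¬p ∣ p₂ := (Nat.prime_dvd_prime_iff_eq Fact.out hp₂).not.2 hne
  have hirr : Irreducible (cyclotomic p₂ (ZMod p)) :=
    ZMod.irreducible_cyclotomic_of_orderOf_eq_totient hpp₂ (by rwa [Nat.totient_prime hp₂])
  have hw : (X - C 1) * cyclotomic p₂ (ZMod p) = X ^ p₂ - 1 := by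
    rw [C_1, mul_comm, cyclotomic_prime_mul_X_sub_one]
  have hroot : X - C 1 ∣ f := by
    rw [dvd_iff_isRoot, IsRoot, eval_finsetSum]
    simpa using hsum
  have hndvd : ¬(X - C 1) * cyclotomic p₂ (ZMod p) ∣ f := by
    rw [hw, ← C_1]
    refine not_dvd_of_degree_lt (sum_fin_C_mul_X_pow_ne_zero ha) ?_
    rw [degree_X_pow_sub_C hp₂.pos]
    exact degree_sum_fin_lt a
  have hgcd := EuclideanDomain.associated_gcd_mul_of_irreducible (X_sub_C_ne_zero 1) hirr hroot
    hndvd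
  rw [hw] at hgcd
  rw [natDegree_eq_of_degree_eq (degree_eq_degree_of_associated
    ((normalize_associated _).trans hgcd)), natDegree_X_sub_C]

theorem stmt_9 (p p₂ : ℕ) (hp : p.Prime) (hp₂ : p₂.Prime) (hne : p ≠ p₂)
    [Fact p.Prime] [DecidableEq (ZMod p)]
    (hgen : orderOf ((p : ZMod p₂)) = p₂ - 1)
    (a : Fin p₂ → ZMod p) (ha : a ≠ 0) (hsum : ∑ i, a i = 0) :
    (normalize (EuclideanDomain.gcd
        (∑ i : Fin p₂, C (a i) * X ^ (i : ℕ)) (X ^ p₂ - 1))).natDegree = 1 :=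
  stmt_9_general p p₂ hp₂ hne hgen a ha hsum
end

section
/- Let k ≥ 3 and let p > k be a prime. Suppose d | k and d < k. Let f(x) = (x^d - 1)^{k/d - 1}(x^{d-1} + ... + x + 1) ∈ F_p[x], written as f(x) = b_0 + b_1 x + ... + b_{k-1}x^{k-1}. Then all coefficients b_i are nonzero in F_p, and gcd(f(x), x^k - 1) = x^d - 1. -/
open Polynomial

-- coefficient formula lemma
lemma coeff_aux (p d m : ℕ) [Fact p.Prime] (hd : 0 < d) (hm : 1 ≤ m) (n : ℕ) (hn : n < d * m) :
    ((X ^ d - 1) ^ (m - 1) * ∑ i ∈ Finset.range d, (X : (ZMod p)[X]) ^ i).coeff n =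
      (-1) ^ (m - 1 - n / d) * (Nat.choose (m - 1) (n / d) : ZMod p) := by
  have hexp : ((X ^ d - 1 : (ZMod p)[X]) ^ (m - 1)) =
      ∑ j ∈ Finset.range m, C ((-1) ^ (m - 1 - j) * (Nat.choose (m - 1) j : ZMod p)) * X ^ (d * j) := by
    have := add_pow (X ^ d : (ZMod p)[X]) (-1) (m - 1)
    rw [show (X ^ d + -1 : (ZMod p)[X]) = X ^ d - 1 by ring] at this
    rw [this, show m - 1 + 1 = m from Nat.succ_pred_eq_of_pos hm]
    refine Finset.sum_congr rfl fun j hj => ?_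
    rw [← pow_mul, map_mul, map_pow, map_neg, map_one, Polynomial.C_eq_natCast]
    ring
  rw [hexp, Finset.sum_mul]
  simp_rw [Finset.mul_sum, mul_assoc, ← pow_add, Polynomial.finset_sum_coeff,
    Polynomial.coeff_C_mul, Polynomial.coeff_X_pow]
  have hq : n / d < m := Nat.div_lt_of_lt_mul hn
  rw [Finset.sum_eq_single (n / d)]
  · rw [Finset.sum_eq_single (n % d)]
    · rw [if_pos, mul_one]
      rw [Nat.div_add_mod]
    · intro i _ hi
      rw [if_neg, mul_zero]
      intro h
      apply hi
      have h2 := Nat.div_add_mod n d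
      omega
    · intro h
      exact absurd (Finset.mem_range.mpr (Nat.mod_lt n hd)) h
  · intro j hj hjne
    apply Finset.sum_eq_zero
    intro i hi
    rw [if_neg, mul_zero]
    intro h
    apply hjne
    have hi' : i < d := Finset.mem_range.mp hi
    subst h
    rw [Nat.mul_add_div hd, Nat.div_eq_of_lt hi', add_zero]
  · intro h
    exact absurd (Finset.mem_range.mpr hq) h

theorem stmt_13 (p k d : ℕ) [Fact p.Prime] [DecidableEq (ZMod p)]
    (hk : 3 ≤ k) (hpk : k < p) (hd : d ∣ k) (hdk : d < k) :
    (∀ i < k,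
      ((X ^ d - 1) ^ (k / d - 1) * ∑ i ∈ Finset.range d, (X : (ZMod p)[X]) ^ i).coeff i ≠ 0) ∧
    normalize (EuclideanDomain.gcd
        ((X ^ d - 1) ^ (k / d - 1) * ∑ i ∈ Finset.range d, (X : (ZMod p)[X]) ^ i)
        (X ^ k - 1)) = X ^ d - 1 := by
  have hp := (Fact.out : p.Prime)
  have hd0 : 0 < d := by
    rcases Nat.eq_zero_or_pos d with h | h
    · subst h; simp at hd; omega
    · exact h
  set m := k / d with hm
  have hkdm : d * m = k := Nat.mul_div_cancel' hd
  have hm2 : 2 ≤ m := by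
    by_contra h
    interval_cases m <;> omega
  constructor
  · intro n hn
    rw [coeff_aux p d m hd0 (by omega) n (by omega)]
    have hq : n / d < m := Nat.div_lt_of_lt_mul (by omega)
    apply mul_ne_zero
    · exact pow_ne_zero _ (neg_ne_zero.mpr one_ne_zero)
    · intro h
      have hdvd : p ∣ Nat.choose (m - 1) (n / d) :=
        (ZMod.natCast_eq_zero_iff _ p).mp h
      have hq' : n / d ≤ m - 1 := by omega
      have hchoosedvd : Nat.choose (m - 1) (n / d) ∣ Nat.factorial (m - 1) :=
        ⟨Nat.factorial (n / d) * Nat.factorial (m - 1 - n / d), by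
          rw [← mul_assoc, Nat.choose_mul_factorial_mul_factorial hq']⟩
      have : p ∣ Nat.factorial (m - 1) := hdvd.trans hchoosedvd
      have hle : p ≤ m - 1 := (Nat.Prime.dvd_factorial hp).mp this
      have : m ≤ k := Nat.div_le_self k d
      omega
  · set f := ((X ^ d - 1) ^ (m - 1) * ∑ i ∈ Finset.range d, (X : (ZMod p)[X]) ^ i) with hf
    set g := EuclideanDomain.gcd f (X ^ k - 1) with hg
    have hsf : Squarefree (X ^ k - 1 : (ZMod p)[X]) := by
      have hk0 : (k : ZMod p) ≠ 0 := by
        intro h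
        have := (ZMod.natCast_eq_zero_iff k p).mp h
        rcases this with ⟨c, rfl⟩
        rcases c with _ | c
        · omega
        · nlinarith [Nat.one_le_iff_ne_zero.mpr hp.ne_zero]
      have := (separable_X_pow_sub_C (1 : ZMod p) (fun h => hk0 h) one_ne_zero).squarefree
      rwa [map_one] at this
    -- X^d - 1 divides f
    have hdvd1 : (X ^ d - 1 : (ZMod p)[X]) ∣ f := by
      rw [hf]
      exact Dvd.dvd.mul_right (dvd_pow_self _ (by omega)) _
    -- X^d - 1 divides X^k - 1
    have hdvd2 : (X ^ d - 1 : (ZMod p)[X]) ∣ X ^ k - 1 := by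
      have := sub_dvd_pow_sub_pow ((X : (ZMod p)[X]) ^ d) 1 m
      rwa [← pow_mul, one_pow, hkdm] at this
    have hgl : (X ^ d - 1 : (ZMod p)[X]) ∣ g := EuclideanDomain.dvd_gcd hdvd1 hdvd2
    -- f divides (X^d - 1)^m
    have hfd : f ∣ (X ^ d - 1 : (ZMod p)[X]) ^ m := by
      have hgeo : (∑ i ∈ Finset.range d, (X : (ZMod p)[X]) ^ i) ∣ X ^ d - 1 :=
        ⟨X - 1, (geom_sum_mul (X : (ZMod p)[X]) d).symm⟩
      calc f ∣ (X ^ d - 1 : (ZMod p)[X]) ^ (m - 1) * (X ^ d - 1) :=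
            mul_dvd_mul_left _ hgeo
        _ = (X ^ d - 1) ^ m := by
            rw [← pow_succ]; congr 1; omega
    have hgsq : Squarefree g := hsf.squarefree_of_dvd (EuclideanDomain.gcd_dvd_right _ _)
    have hgr : g ∣ (X ^ d - 1 : (ZMod p)[X]) := by
      have : g ∣ (X ^ d - 1 : (ZMod p)[X]) ^ m :=
        (EuclideanDomain.gcd_dvd_left _ _).trans hfd
      exact (hgsq.dvd_pow_iff_dvd (by omega)).mp this
    rw [normalize_eq_normalize hgr hgl]
    have hmonic : ((X : (ZMod p)[X]) ^ d - 1).Monic := by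
      have := monic_X_pow_sub_C (1 : ZMod p) (by omega : d ≠ 0)
      rwa [map_one] at this
    exact hmonic.normalize_eq_self
end

section
/- If b_0 and b_1 are coprime integers with b_0^2 + b_0 b_1 + b_1^2 = 3^i, then i ∈ {0, 1}. -/
theorem stmt_18 (b₀ b₁ : ℤ) (i : ℕ) (hcop : IsCoprime b₀ b₁)
    (hnorm : b₀ ^ 2 + b₀ * b₁ + b₁ ^ 2 = 3 ^ i) :
    i = 0 ∨ i = 1 := by
  by_contra h
  push_neg at h
  obtain ⟨h0, h1⟩ := h
  have hi2 : 2 ≤ i := by omega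
  have h9 : (9 : ℤ) ∣ b₀ ^ 2 + b₀ * b₁ + b₁ ^ 2 := by
    rw [hnorm]
    obtain ⟨k, rfl⟩ := Nat.exists_eq_add_of_le hi2
    rw [pow_add]
    exact Dvd.dvd.mul_right (by norm_num) _
  have hp : Prime (3 : ℤ) := Int.prime_three
  have h3 : (3 : ℤ) ∣ (b₀ - b₁) ^ 2 := by
    have : (3 : ℤ) ∣ b₀ ^ 2 + b₀ * b₁ + b₁ ^ 2 := dvd_trans (by norm_num) h9
    have h2 : (b₀ - b₁) ^ 2 = (b₀ ^ 2 + b₀ * b₁ + b₁ ^ 2) - 3 * (b₀ * b₁) := by ring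
    rw [h2]
    exact dvd_sub this ⟨b₀ * b₁, rfl⟩
  have h3d : (3 : ℤ) ∣ b₀ - b₁ := hp.dvd_of_dvd_pow h3
  have h9sq : (9 : ℤ) ∣ (b₀ - b₁) ^ 2 := by
    obtain ⟨c, hc⟩ := h3d
    exact ⟨c ^ 2, by rw [hc]; ring⟩
  have h3ab : (3 : ℤ) ∣ b₀ * b₁ := by
    have h93 : (9 : ℤ) ∣ 3 * (b₀ * b₁) := by
      have h2 : 3 * (b₀ * b₁) = (b₀ ^ 2 + b₀ * b₁ + b₁ ^ 2) - (b₀ - b₁) ^ 2 := by ring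
      rw [h2]
      exact dvd_sub h9 h9sq
    obtain ⟨c, hc⟩ := h93
    exact ⟨c, by linarith⟩
  have hboth : (3 : ℤ) ∣ b₀ ∧ (3 : ℤ) ∣ b₁ := by
    rcases hp.dvd_mul.mp h3ab with h | h
    · exact ⟨h, by have := dvd_sub h h3d; simpa using this⟩
    · exact ⟨by have := dvd_add h3d h; simpa using this, h⟩
  have : IsUnit (3 : ℤ) := hcop.isUnit_of_dvd' hboth.1 hboth.2
  exact hp.not_unit this
end

section
/- Let n > 3 with 3 | n, and set a_0 = n/3 - 1, a_1 = n/3, a_2 = n/3 + 1. Then a_0 + a_1 + a_2 = n, gcd(a_0, a_1, a_2, n) = 1, and gcd(a_0^2 + a_0 a_1 + a_1^2, n) = 1. -/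
theorem stmt_19 (n : ℕ) (hn : 3 < n) (h3 : 3 ∣ n) :
    (n / 3 - 1) + n / 3 + (n / 3 + 1) = n ∧
    Nat.gcd (n / 3 - 1) (Nat.gcd (n / 3) (Nat.gcd (n / 3 + 1) n)) = 1 ∧
    Nat.gcd ((n / 3 - 1) ^ 2 + (n / 3 - 1) * (n / 3) + (n / 3) ^ 2) n = 1 := by
  obtain ⟨m, rfl⟩ := h3
  rw [Nat.mul_div_cancel_left m (by norm_num)]
  have hm : 2 ≤ m := by omega
  refine ⟨by omega, ?_, ?_⟩
  · have h1 : Nat.gcd m (Nat.gcd (m + 1) (3 * m)) = 1 := by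
      have hd : Nat.gcd m (Nat.gcd (m + 1) (3 * m)) ∣ Nat.gcd m (m + 1) :=
        Nat.dvd_gcd (Nat.gcd_dvd_left _ _)
          ((Nat.gcd_dvd_right _ _).trans (Nat.gcd_dvd_left _ _))
      have : Nat.gcd m (m + 1) = 1 := by simp [Nat.succ_eq_add_one, Nat.gcd_self_add_left, Nat.gcd_comm]
      exact Nat.eq_one_of_dvd_one (by rwa [this] at hd)
    rw [h1, Nat.gcd_one_right]
  · obtain ⟨k, rfl⟩ : ∃ k, m = k + 1 := ⟨m - 1, by omega⟩
    have he : (k + 1 - 1) ^ 2 + (k + 1 - 1) * (k + 1) + (k + 1) ^ 2 = 3 * k ^ 2 + 3 * k + 1 := by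
      simp; ring
    rw [he]
    set d := Nat.gcd (3 * k ^ 2 + 3 * k + 1) (3 * (k + 1)) with hdd
    have h1 : d ∣ 3 * k ^ 2 + 3 * k + 1 := Nat.gcd_dvd_left _ _
    have h2 : d ∣ 3 * (k + 1) := Nat.gcd_dvd_right _ _
    have h3 : d ∣ (3 * (k + 1)) * k := h2.mul_right k
    have h4 : d ∣ 3 * k ^ 2 + 3 * k + 1 + (3 * (k + 1)) * k := h1.add h3
    have h5 : 3 * k ^ 2 + 3 * k + 1 + (3 * (k + 1)) * k = (3 * k ^ 2 + 3 * k) * 2 + 1 := by ring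
    have h6 : d ∣ (3 * k ^ 2 + 3 * k) * 2 := by
      have : d ∣ 3 * k ^ 2 + 3 * k := by
        have := h3
        have heq : (3 * (k + 1)) * k = 3 * k ^ 2 + 3 * k := by ring
        rwa [heq] at this
      exact this.mul_right 2
    have : d ∣ 1 := (Nat.dvd_add_right h6).mp (by rwa [h5] at h4)
    exact Nat.eq_one_of_dvd_one this
end
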